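/- A positive real number λ is a weak Perron number if and only if some positive integer power λ^n of λ is a Perron number. Moreover, if λ is a weak Perron number, every Galois conjugate of λ of absolute value equal to λ is of the form λ times a root of unity. -/

import Mathlib

open Set Filter Topology

/-- `z ∈ ℂ` is a Galois conjugate of the real algebraic number `x`:
it is a root of the minimal polynomial of `x` over `ℚ`. -/
def IsGaloisConj (x : ℝ) (z : ℂ) : Prop := Polynomial.aeval z (minpoly ℚ x) = 0

/-- A weak Perron number: a positive real algebraic integer which is at least as large as
the absolute value of each of its Galois conjugates. -/
def IsWeakPerron (l : ℝ) : Prop :=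
  0 < l ∧ IsIntegral ℤ l ∧ ∀ z : ℂ, IsGaloisConj l z → ‖z‖ ≤ l

/-- A Perron number: a positive real algebraic integer strictly larger than the absolute
value of each of its other Galois conjugates. -/
def IsPerron (l : ℝ) : Prop :=
  0 < l ∧ IsIntegral ℤ l ∧ ∀ z : ℂ, IsGaloisConj l z → z ≠ (l : ℂ) → ‖z‖ < l

/-! For a weak Perron number `λ`, let `K ⊆ ℂ` be a finite normal extension of `ℚ` containing
`λ`, so that the conjugates of `λ` are the `g λ` for `g ∈ Gal(K/ℚ)`. The set `H` of
automorphisms with `|g λ| = λ` contains complex conjugation `c` and is closed under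
multiplication: for `g, h ∈ H`, applying `g` to `h λ · c (h λ) = λ²` writes `(g λ)²` as the
product of the two conjugates `g (h λ)` and `g (c (h λ))`, both of modulus at most `λ`, so both
have modulus exactly `λ`. Hence `Q = ∏_{h ∈ H} h λ` is fixed by `H`; in particular `Q` is real,
so `Q² = λ^{2|H|}`, and applying `g ∈ H` gives `(g λ)^{2|H|} = λ^{2|H|}`. With `k = 2|H|` every
conjugate `(g λ)^k` of `λ^k` is either `λ^k` or of modulus `< λ^k`.
Conversely, `z^n` is a conjugate of `λ^n` whenever `z` is a conjugate of `λ`. -/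

open Polynomial ComplexConjugate

theorem Finset.prod_comp_mul_left_of_mul_mem {G M : Type*} [Group G] [CommMonoid M]
    {s : Finset G} {g : G} (hg : ∀ h ∈ s, g * h ∈ s) (f : G → M) :
    ∏ h ∈ s, f (g * h) = ∏ h ∈ s, f h := by
  classical
  have himage : s.image (g * ·) = s :=
    Finset.eq_of_subset_of_card_le (Finset.image_subset_iff.mpr hg)
      (Finset.card_image_of_injective _ (mul_right_injective g)).ge
  conv_rhs => rw [← himage]
  rw [Finset.prod_image fun a _ b _ => mul_left_cancel]

theorem Complex.sq_eq_norm_sq_of_conj_eq {z : ℂ} (hz : conj z = z) : z ^ 2 = (‖z‖ : ℂ) ^ 2 := by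
  rw [← Complex.mul_conj', hz, sq]

theorem Normal.exists_algEquiv_algebraMap_apply_eq {F K E : Type*} [Field F] [Field K] [Field E]
    [Algebra F K] [Algebra K E] [Algebra F E] [IsScalarTower F K E] [Normal F K] (y : K) {z : E}
    (hz : aeval z (minpoly F y) = 0) : ∃ g : K ≃ₐ[F] K, algebraMap K E (g y) = z := by
  have hy : IsIntegral F y := Normal.isIntegral inferInstance y
  obtain ⟨w, rfl⟩ : z ∈ (algebraMap K E).range := by
    refine (Normal.splits inferInstance y).mem_range_of_isRoot
      (Polynomial.map_ne_zero (minpoly.ne_zero hy)) ?_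
    rwa [Polynomial.map_map, ← IsScalarTower.algebraMap_eq, IsRoot, eval_map_algebraMap]
  have hw : aeval w (minpoly F y) = 0 :=
    (algebraMap K E).injective (by rwa [← aeval_algebraMap_apply, map_zero])
  obtain ⟨g, hg⟩ := minpoly.exists_algEquiv_of_root' hy.isAlgebraic hw
  exact ⟨g, by rw [hg]⟩

noncomputable def conjAlgEquiv (K : IntermediateField ℚ ℂ) [Normal ℚ K] : K ≃ₐ[ℚ] K :=
  (starRingEnd ℂ).toRatAlgHom.restrictNormal' K

theorem coe_conjAlgEquiv_apply (K : IntermediateField ℚ ℂ) [Normal ℚ K] (y : K) :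
    (conjAlgEquiv K y : ℂ) = conj (y : ℂ) :=
  AlgHom.restrictNormal_commutes _ K y

section Conjugates

variable {K : IntermediateField ℚ ℂ} {x : K} {r : ℝ}

theorem isGaloisConj_iff_aeval_minpoly (hx : (x : ℂ) = r) {z : ℂ} :
    IsGaloisConj r z ↔ aeval z (minpoly ℚ x) = 0 := by
  rw [IsGaloisConj, ← minpoly.algebraMap_eq (algebraMap ℝ ℂ).injective,
    ← minpoly.algebraMap_eq (algebraMap K ℂ).injective, IntermediateField.algebraMap_apply, hx]
  rfl

theorem isGaloisConj_algEquiv_apply (hx : (x : ℂ) = r) (g : K ≃ₐ[ℚ] K) :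
    IsGaloisConj r (g x) := by
  rw [isGaloisConj_iff_aeval_minpoly hx, ← IntermediateField.algebraMap_apply,
    aeval_algebraMap_apply, (isConjRoot_of_algEquiv x g).aeval_eq_zero, map_zero]

theorem IsGaloisConj.exists_algEquiv [Normal ℚ K] (hx : (x : ℂ) = r) {z : ℂ}
    (hz : IsGaloisConj r z) : ∃ g : K ≃ₐ[ℚ] K, (g x : ℂ) = z :=
  Normal.exists_algEquiv_algebraMap_apply_eq x ((isGaloisConj_iff_aeval_minpoly hx).mp hz)

end Conjugates

section SameModulus

variable {K : IntermediateField ℚ ℂ}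

noncomputable def sameModulusAut [FiniteDimensional ℚ K] (x : K) : Finset (K ≃ₐ[ℚ] K) :=
  {g | ‖(g x : ℂ)‖ = ‖(x : ℂ)‖}

variable [FiniteDimensional ℚ K] {x : K}

theorem mem_sameModulusAut {g : K ≃ₐ[ℚ] K} :
    g ∈ sameModulusAut x ↔ ‖(g x : ℂ)‖ = ‖(x : ℂ)‖ := by
  simp [sameModulusAut]

variable [Normal ℚ K]

theorem conjAlgEquiv_mem_sameModulusAut : conjAlgEquiv K ∈ sameModulusAut x := by
  rw [mem_sameModulusAut, coe_conjAlgEquiv_apply, Complex.norm_conj]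

theorem mul_mem_sameModulusAut (hreal : conj (x : ℂ) = x)
    (hmax : ∀ g : K ≃ₐ[ℚ] K, ‖(g x : ℂ)‖ ≤ ‖(x : ℂ)‖) {g h : K ≃ₐ[ℚ] K}
    (hg : g ∈ sameModulusAut x) (hh : h ∈ sameModulusAut x) : g * h ∈ sameModulusAut x := by
  rw [mem_sameModulusAut] at *
  set c := conjAlgEquiv K
  have hkey : h x * c (h x) = x ^ 2 := by
    apply Subtype.coe_injective
    push_cast
    rw [coe_conjAlgEquiv_apply, Complex.mul_conj', hh, ← Complex.mul_conj', hreal, sq]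
  have hnorm : ‖(g (h x) : ℂ)‖ * ‖(g (c (h x)) : ℂ)‖ = ‖(x : ℂ)‖ ^ 2 := by
    have hkey' : g (h x) * g (c (h x)) = g x ^ 2 := by rw [← map_mul, hkey, map_pow]
    rw [← norm_mul, ← hg, ← norm_pow]
    exact_mod_cast congrArg (fun y : K => ‖(y : ℂ)‖) hkey'
  have h₁ : ‖(g (h x) : ℂ)‖ ≤ ‖(x : ℂ)‖ := hmax (g * h)
  have h₂ : ‖(g (c (h x)) : ℂ)‖ ≤ ‖(x : ℂ)‖ := hmax (g * (c * h))
  rw [AlgEquiv.mul_apply]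
  nlinarith [norm_nonneg (g (h x) : ℂ), norm_nonneg (g (c (h x)) : ℂ)]

theorem apply_prod_sameModulusAut (hreal : conj (x : ℂ) = x)
    (hmax : ∀ g : K ≃ₐ[ℚ] K, ‖(g x : ℂ)‖ ≤ ‖(x : ℂ)‖) {g : K ≃ₐ[ℚ] K}
    (hg : g ∈ sameModulusAut x) :
    g (∏ h ∈ sameModulusAut x, h x) = ∏ h ∈ sameModulusAut x, h x := by
  rw [map_prod]
  exact Finset.prod_comp_mul_left_of_mul_mem
    (fun h hh => mul_mem_sameModulusAut hreal hmax hg hh) (fun h => h x)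

theorem exists_pow_apply_eq_of_mem_sameModulusAut (hreal : conj (x : ℂ) = x)
    (hmax : ∀ g : K ≃ₐ[ℚ] K, ‖(g x : ℂ)‖ ≤ ‖(x : ℂ)‖) :
    ∃ k, 0 < k ∧ ∀ g ∈ sameModulusAut x, g x ^ k = x ^ k := by
  set S := sameModulusAut x
  set Q := ∏ h ∈ S, h x
  have hQreal : conj (Q : ℂ) = Q := by
    rw [← coe_conjAlgEquiv_apply, apply_prod_sameModulusAut hreal hmax
      conjAlgEquiv_mem_sameModulusAut]
  have hQnorm : ‖(Q : ℂ)‖ = ‖(x : ℂ)‖ ^ S.card := by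
    simp only [Q]
    push_cast
    rw [norm_prod,
      Finset.prod_congr rfl fun h hh => mem_sameModulusAut.mp hh, Finset.prod_const]
  have hQsq : Q ^ 2 = x ^ (2 * S.card) := by
    apply Subtype.coe_injective
    push_cast
    rw [Complex.sq_eq_norm_sq_of_conj_eq hQreal, hQnorm, pow_mul,
      Complex.sq_eq_norm_sq_of_conj_eq hreal]
    push_cast
    ring
  refine ⟨2 * S.card, by simpa using ⟨1, by simp [S, mem_sameModulusAut]⟩, fun g hg => ?_⟩
  rw [← map_pow, ← hQsq, map_pow, apply_prod_sameModulusAut hreal hmax hg]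

end SameModulus

theorem exists_intermediateField_normal_mem {z : ℂ} (hz : IsIntegral ℚ z) :
    ∃ K : IntermediateField ℚ ℂ, FiniteDimensional ℚ K ∧ Normal ℚ K ∧ z ∈ K := by
  let K := IntermediateField.adjoin ℚ ((minpoly ℚ z).rootSet ℂ)
  have : (minpoly ℚ z).IsSplittingField ℚ K :=
    IntermediateField.adjoin_rootSet_isSplittingField (IsAlgClosed.splits _)
  refine ⟨K, IsSplittingField.finiteDimensional K (minpoly ℚ z),
    Normal.of_isSplittingField (minpoly ℚ z), IntermediateField.subset_adjoin ℚ _ ?_⟩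
  exact (mem_rootSet.mpr ⟨minpoly.ne_zero hz, minpoly.aeval ℚ z⟩)

theorem IsGaloisConj.pow {r : ℝ} {z : ℂ} (hz : IsGaloisConj r z) (n : ℕ) :
    IsGaloisConj (r ^ n) (z ^ n) := by
  obtain ⟨q, hq⟩ : minpoly ℚ r ∣ (minpoly ℚ (r ^ n)).comp (X ^ n) :=
    minpoly.dvd ℚ r (by simp [aeval_comp])
  have : aeval z ((minpoly ℚ (r ^ n)).comp (X ^ n)) = 0 := by
    rw [hq, map_mul, hz, zero_mul]
  simpa [IsGaloisConj, aeval_comp] using this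

theorem isWeakPerron_of_isPerron_pow {lam : ℝ} (hpos : 0 < lam) {n : ℕ} (hn : 0 < n)
    (h : IsPerron (lam ^ n)) : IsWeakPerron lam := by
  obtain ⟨-, hint, hconj⟩ := h
  refine ⟨hpos, hint.of_pow hn, fun z hz => le_of_pow_le_pow_left₀ hn.ne' hpos.le ?_⟩
  rw [← norm_pow]
  by_cases hzn : z ^ n = ((lam ^ n : ℝ) : ℂ)
  · rw [hzn, Complex.norm_real, Real.norm_of_nonneg (by positivity)]
  · exact (hconj _ (hz.pow n) hzn).le

theorem IsWeakPerron.exists_isPerron_pow {lam : ℝ} (h : IsWeakPerron lam) :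
    ∃ k : ℕ, 0 < k ∧ IsPerron (lam ^ k) ∧
      ∀ z : ℂ, IsGaloisConj lam z → ‖z‖ = lam → (z / lam) ^ k = 1 := by
  obtain ⟨hpos, hint, hconj⟩ := h
  obtain ⟨K, _, _, hmem⟩ :=
    exists_intermediateField_normal_mem ((hint.tower_top (A := ℚ)).algebraMap (B := ℂ))
  set x : K := ⟨lam, hmem⟩
  have hx : (x : ℂ) = lam := rfl
  have hnorm : ‖(x : ℂ)‖ = lam := by rw [hx, Complex.norm_real, Real.norm_of_nonneg hpos.le]
  have hmax (g : K ≃ₐ[ℚ] K) : ‖(g x : ℂ)‖ ≤ ‖(x : ℂ)‖ :=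
    hnorm ▸ hconj _ (isGaloisConj_algEquiv_apply hx g)
  obtain ⟨k, hk, hpow⟩ :=
    exists_pow_apply_eq_of_mem_sameModulusAut (by rw [hx, Complex.conj_ofReal]) hmax
  have hpowC (g : K ≃ₐ[ℚ] K) (hg : ‖(g x : ℂ)‖ = lam) : (g x : ℂ) ^ k = lam ^ k := by
    have := congrArg ((↑) : K → ℂ) (hpow g (mem_sameModulusAut.mpr (hg.trans hnorm.symm)))
    rwa [IntermediateField.coe_pow, IntermediateField.coe_pow, hx] at this
  refine ⟨k, hk, ⟨pow_pos hpos k, hint.pow k, fun w hw hne => ?_⟩, fun z hz hzn => ?_⟩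
  · obtain ⟨g, rfl⟩ := hw.exists_algEquiv (x := x ^ k) (by push_cast; rfl)
    rw [map_pow] at hne ⊢
    push_cast at hne ⊢
    rcases (hmax g).lt_or_eq with hlt | heq
    · rw [norm_pow]
      exact pow_lt_pow_left₀ (hnorm ▸ hlt) (norm_nonneg _) hk.ne'
    · exact absurd (hpowC g (heq.trans hnorm)) hne
  · obtain ⟨g, rfl⟩ := hz.exists_algEquiv hx
    rw [div_pow, hpowC g hzn, div_self (pow_ne_zero k (by exact_mod_cast hpos.ne'))]

/-- A positive real number is a weak Perron number if and only if some positive integer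
power of it is a Perron number; moreover every Galois conjugate of a weak Perron number
of maximal modulus is the number itself times a root of unity. -/
theorem weakPerron_iff_pow_perron (lam : ℝ) (hpos : 0 < lam) :
    (IsWeakPerron lam ↔ ∃ n : ℕ, 0 < n ∧ IsPerron (lam ^ n)) ∧
    (IsWeakPerron lam → ∀ z : ℂ, IsGaloisConj lam z → ‖z‖ = lam →
      ∃ k : ℕ, 0 < k ∧ (z / (lam : ℂ)) ^ k = 1) := by
  refine ⟨⟨fun h => ?_, fun ⟨n, hn, h⟩ => isWeakPerron_of_isPerron_pow hpos hn h⟩,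
    fun h z hz hzn => ?_⟩
  · obtain ⟨k, hk, hperron, -⟩ := h.exists_isPerron_pow
    exact ⟨k, hk, hperron⟩
  · obtain ⟨k, hk, -, hroot⟩ := h.exists_isPerron_pow
    exact ⟨k, hk, hroot z hz hzn⟩
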